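/- Up to the action of the group Aff(ℤ²) of lattice-preserving affine automorphisms of ℝ², the quadrangle with vertices (1,0), (0,1), (1,2), (2,0) and the unit square with vertices (0,0), (1,0), (1,1), (0,1) scaled appropriately are the only lattice quadrangles with exactly one interior integral point and all four edges of lattice length 1. -/

import Mathlib

/-- Embedding of the integer lattice into the real plane. -/
def toR (p : ℤ × ℤ) : ℝ × ℝ := ((p.1 : ℝ), (p.2 : ℝ))

/-- `T` is a lattice-preserving affine automorphism of ℤ² (an element of Aff(ℤ²)). -/
def IsUnimodularAffine (T : ℤ × ℤ → ℤ × ℤ) : Prop :=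
  ∃ a b c d e f : ℤ, (a * d - b * c = 1 ∨ a * d - b * c = -1) ∧
    ∀ p : ℤ × ℤ, T p = (a * p.1 + b * p.2 + e, c * p.1 + d * p.2 + f)

/-- Two finite lattice point configurations are equivalent under Aff(ℤ²). -/
def LatticeEquiv (Q Q' : Finset (ℤ × ℤ)) : Prop :=
  ∃ T : ℤ × ℤ → ℤ × ℤ, IsUnimodularAffine T ∧ Q.image T = Q'

/-- The convex hull of a lattice point configuration, in ℝ². -/
noncomputable def hullR (Q : Finset (ℤ × ℤ)) : Set (ℝ × ℝ) :=
  convexHull ℝ (toR '' ↑Q)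

/-- `Q` is the vertex set of a lattice polygon with `n` vertices, all of whose boundary
lattice points are vertices (i.e. all edges have lattice length 1) and with exactly `i`
interior lattice points. -/
def IsLatticePolygonPrimitiveEdges (Q : Finset (ℤ × ℤ)) (n i : ℕ) : Prop :=
  Q.card = n ∧
  (∀ p ∈ Q, toR p ∈ Set.extremePoints ℝ (hullR Q)) ∧
  (∀ q : ℤ × ℤ, toR q ∈ frontier (hullR Q) → q ∈ Q) ∧
  Set.ncard {q : ℤ × ℤ | toR q ∈ interior (hullR Q)} = i

/-- The quadrangle conv{(1,0),(0,1),(1,2),(2,0)} with a single interior point (1,1). -/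
def Q1 : Finset (ℤ × ℤ) := {(1, 0), (0, 1), (1, 2), (2, 0)}

/-- The parallelogram conv{(0,0),(1,1),(0,2),(-1,1)} of area 2 with a single interior
point (0,1). -/
def Q2 : Finset (ℤ × ℤ) := {(0, 0), (1, 1), (0, 2), (-1, 1)}


/-!
Let `w` be the unique interior lattice point of such a quadrangle `Q`. Two of the five lattice
points of `Q ∪ {w}` agree modulo 2, so their midpoint is a lattice point of the hull; it can only
be `w`, hence two opposite vertices are `w ± u`, and the other two are `w + a`, `w + b`. As the
only lattice points of the hull are the vertices and `w`, a lattice triangle `w, w + v₁, w + v₂`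
spanned by vertices contains no further lattice point, which forces `cross v₁ v₂ = ±1` whenever it
is nonzero. The line through `w` in direction `u` must separate `w + a` from `w + b`, so
`cross u (a + b) = 0` and `a + b = k • u`. For `k = 0` the quadrangle is the parallelogram `Q2`;
otherwise `cross a b = ±1` forces `k = ±1`, and the quadrangle is `Q1`. Conversely `Q1` and `Q2`
are checked directly and the property is invariant under Aff(ℤ²); the two models differ since
only `Q2` is centrally symmetric.
-/

open Set

theorem ContinuousLinearMap.eq_zero_of_isMinOn {E : Type*} [NormedAddCommGroup E]
    [NormedSpace ℝ E] {ℓ : E →L[ℝ] ℝ} {s : Set E} {x : E} (h : IsMinOn ℓ s x)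
    (hx : x ∈ interior s) : ℓ = 0 :=
  (h.isLocalMin (mem_interior_iff_mem_nhds.1 hx)).hasFDerivAt_eq_zero ℓ.hasFDerivAt

theorem mem_extremePoints_convexHull_of_notMem {E : Type*} [NormedAddCommGroup E]
    [NormedSpace ℝ E] {s : Set E} (hs : s.Finite) {x : E} (hx : x ∈ s)
    (hx' : x ∉ convexHull ℝ (s \ {x})) : x ∈ (convexHull ℝ s).extremePoints ℝ := by
  by_contra h
  have hsub : (convexHull ℝ s).extremePoints ℝ ⊆ s \ {x} := fun y hy =>
    ⟨extremePoints_convexHull_subset hy, by rintro rfl; exact h hy⟩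
  apply hx'
  rw [← (hs.sdiff (t := {x})).isClosed_convexHull (𝕜 := ℝ) |>.closure_eq]
  have hKM := closure_convexHull_extremePoints (hs.isCompact_convexHull (𝕜 := ℝ))
    (convex_convexHull ℝ s)
  exact closure_mono (convexHull_mono hsub) (hKM.symm ▸ subset_convexHull ℝ s hx)

theorem AffineEquiv.image_extremePoints {𝕜 E F : Type*} [Ring 𝕜] [PartialOrder 𝕜]
    [IsOrderedRing 𝕜] [AddCommGroup E] [Module 𝕜 E] [AddCommGroup F] [Module 𝕜 F]
    (f : E ≃ᵃ[𝕜] F) (s : Set E) : f '' s.extremePoints 𝕜 = (f '' s).extremePoints 𝕜 := by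
  ext b
  obtain ⟨a, rfl⟩ := f.surjective b
  have : ∀ x y, f '' openSegment 𝕜 x y = openSegment 𝕜 (f x) (f y) :=
    image_openSegment _ f.toAffineMap
  simp only [mem_extremePoints, f.surjective.forall, f.injective.mem_set_image,
    f.injective.eq_iff, ← this]

theorem mem_interior_of_cross {S : Set (ℝ × ℝ)} (hS : Convex ℝ S) {c : ℝ × ℝ} {r : ℝ}
    (hr : 0 < r) (h₁ : c + (r, 0) ∈ S) (h₂ : c - (r, 0) ∈ S) (h₃ : c + (0, r) ∈ S)
    (h₄ : c - (0, r) ∈ S) : c ∈ interior S := by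
  -- the corners of the box of half-width `r / 2` are midpoints of the four given points
  have hbox : Icc (c.1 - r / 2) (c.1 + r / 2) ×ˢ Icc (c.2 - r / 2) (c.2 + r / 2) ⊆ S := by
    rw [← segment_eq_Icc (by linarith), ← segment_eq_Icc (by linarith), ← convexHull_pair,
      ← convexHull_pair, ← convexHull_prod]
    refine convexHull_min ?_ hS
    have mid : ∀ p ∈ S, ∀ q ∈ S, (1 / 2 : ℝ) • p + (1 / 2 : ℝ) • q ∈ S := fun p hp q hq =>
      hS hp hq (by norm_num) (by norm_num) (by norm_num)
    rintro ⟨x, y⟩ ⟨hx, hy⟩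
    simp only [mem_insert_iff, mem_singleton_iff] at hx hy
    rcases hx with rfl | rfl <;> rcases hy with rfl | rfl <;>
      [convert mid _ h₂ _ h₄ using 1; convert mid _ h₂ _ h₃ using 1;
        convert mid _ h₁ _ h₄ using 1; convert mid _ h₁ _ h₃ using 1] <;>
      ext <;> simp only [Prod.fst_add, Prod.snd_add, Prod.fst_sub, Prod.snd_sub, Prod.smul_fst,
        Prod.smul_snd, smul_eq_mul] <;> ring
  refine mem_interior.2 ⟨Ioo (c.1 - r / 2) (c.1 + r / 2) ×ˢ Ioo (c.2 - r / 2) (c.2 + r / 2),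
    (prod_mono Ioo_subset_Icc_self Ioo_subset_Icc_self).trans hbox, isOpen_Ioo.prod isOpen_Ioo, ?_⟩
  constructor <;> constructor <;> linarith

theorem toR_injective : Function.Injective toR := fun p q h => by
  simp only [toR, Prod.mk.injEq, Int.cast_inj] at h
  exact Prod.ext h.1 h.2

@[simp] theorem toR_add (p q : ℤ × ℤ) : toR (p + q) = toR p + toR q := by
  simp [toR]

@[simp] theorem toR_zsmul (k : ℤ) (p : ℤ × ℤ) : toR (k • p) = (k : ℝ) • toR p := by
  simp [toR]

theorem convex_hullR (Q : Finset (ℤ × ℤ)) : Convex ℝ (hullR Q) := convex_convexHull ℝ _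

theorem isClosed_hullR (Q : Finset (ℤ × ℤ)) : IsClosed (hullR Q) :=
  (Q.finite_toSet.image toR).isClosed_convexHull (𝕜 := ℝ)

theorem toR_mem_hullR {Q : Finset (ℤ × ℤ)} {p : ℤ × ℤ} (hp : p ∈ Q) : toR p ∈ hullR Q :=
  subset_convexHull ℝ _ (mem_image_of_mem toR hp)

def linForm (α β : ℝ) : ℝ × ℝ →L[ℝ] ℝ :=
  α • ContinuousLinearMap.fst ℝ ℝ ℝ + β • ContinuousLinearMap.snd ℝ ℝ ℝ

@[simp] theorem linForm_apply (α β : ℝ) (x : ℝ × ℝ) : linForm α β x = α * x.1 + β * x.2 := rfl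

theorem linForm_toR (α β : ℤ) (p : ℤ × ℤ) :
    linForm α β (toR p) = ((α * p.1 + β * p.2 : ℤ) : ℝ) := by
  simp [toR]

theorem hullR_subset_halfPlane {Q : Finset (ℤ × ℤ)} {α β r : ℤ}
    (h : ∀ p ∈ Q, r ≤ α * p.1 + β * p.2) : hullR Q ⊆ {y | (r : ℝ) ≤ linForm α β y} := by
  refine convexHull_min ?_ (convex_halfSpace_ge (linForm α β).toLinearMap.isLinear _)
  rintro _ ⟨p, hp, rfl⟩
  rw [mem_ofPred_eq, linForm_toR, Int.cast_le]
  exact h p hp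

theorem le_of_toR_mem_hullR {Q : Finset (ℤ × ℤ)} {α β r : ℤ}
    (h : ∀ p ∈ Q, r ≤ α * p.1 + β * p.2) {q : ℤ × ℤ} (hq : toR q ∈ hullR Q) :
    r ≤ α * q.1 + β * q.2 := by
  have := hullR_subset_halfPlane h hq
  rwa [mem_ofPred_eq, linForm_toR, Int.cast_le] at this

theorem lt_of_toR_mem_interior_hullR {Q : Finset (ℤ × ℤ)} {α β r : ℤ} (hαβ : α ≠ 0 ∨ β ≠ 0)
    (h : ∀ p ∈ Q, r ≤ α * p.1 + β * p.2) {w : ℤ × ℤ} (hw : toR w ∈ interior (hullR Q)) :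
    r < α * w.1 + β * w.2 := by
  by_contra! hle
  have hmin : IsMinOn (linForm α β) (hullR Q) (toR w) := fun y hy => by
    have := hullR_subset_halfPlane h hy
    rw [mem_ofPred_eq] at this
    rw [mem_ofPred_eq, linForm_toR]
    exact le_trans (by exact_mod_cast hle) this
  have hzero := ContinuousLinearMap.eq_zero_of_isMinOn hmin hw
  have h₁ := congrArg (fun ℓ => ℓ (1, 0)) hzero
  have h₂ := congrArg (fun ℓ => ℓ (0, 1)) hzero
  simp only [linForm_apply, zero_apply, mul_one, mul_zero, add_zero, zero_add, Int.cast_eq_zero]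
    at h₁ h₂
  exact hαβ.elim (· h₁) (· h₂)

theorem toR_mem_extremePoints_hullR {Q : Finset (ℤ × ℤ)} {p : ℤ × ℤ} (hp : p ∈ Q) {α β : ℤ}
    (h : ∀ q ∈ Q, q ≠ p → α * p.1 + β * p.2 < α * q.1 + β * q.2) :
    toR p ∈ (hullR Q).extremePoints ℝ := by
  refine mem_extremePoints_convexHull_of_notMem (Q.finite_toSet.image toR)
    (mem_image_of_mem toR hp) fun hmem => ?_
  have hsub : convexHull ℝ (toR '' ↑Q \ {toR p}) ⊆
      {y | linForm α β (toR p) < linForm α β y} := by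
    refine convexHull_min ?_ (convex_halfSpace_gt (linForm α β).toLinearMap.isLinear _)
    rintro _ ⟨⟨q, hq, rfl⟩, hne⟩
    rw [mem_ofPred_eq, linForm_toR, linForm_toR, Int.cast_lt]
    exact h q hq fun hqp => hne (hqp ▸ rfl)
  exact lt_irrefl _ (mem_ofPred_eq ▸ hsub hmem)

def cross (u v : ℤ × ℤ) : ℤ := u.1 * v.2 - u.2 * v.1

@[simp] theorem cross_neg_left (u v : ℤ × ℤ) : cross (-u) v = -cross u v := by
  simp only [cross, Prod.fst_neg, Prod.snd_neg]
  ring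

@[simp] theorem cross_add_right (u v v' : ℤ × ℤ) : cross u (v + v') = cross u v + cross u v' := by
  simp only [cross, Prod.fst_add, Prod.snd_add]
  ring

theorem cross_smul_eq (u v z : ℤ × ℤ) : cross u v • z = cross z v • u + cross u z • v := by
  ext <;> simp only [cross, Prod.smul_fst, Prod.smul_snd, Prod.fst_add, Prod.snd_add,
    smul_eq_mul] <;> ring

theorem toR_eq_cross_div {u v : ℤ × ℤ} (h : cross u v ≠ 0) (z : ℤ × ℤ) :
    toR z = (cross z v / cross u v : ℝ) • toR u + (cross u z / cross u v : ℝ) • toR v := by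
  have hz := congrArg toR (cross_smul_eq u v z)
  simp only [toR_add, toR_zsmul] at hz
  rw [div_eq_inv_mul, div_eq_inv_mul, mul_smul, mul_smul, ← smul_add, ← hz, smul_smul,
    inv_mul_cancel₀ (by exact_mod_cast h), one_smul]

theorem exists_eq_smul_of_cross_eq_zero {u v : ℤ × ℤ} (hu : IsCoprime u.1 u.2)
    (h : cross u v = 0) : ∃ k : ℤ, v = k • u := by
  obtain ⟨m, n, hmn⟩ := hu
  unfold cross at h
  refine ⟨m * v.1 + n * v.2, Prod.ext ?_ ?_⟩ <;>
    simp only [Prod.smul_fst, Prod.smul_snd, smul_eq_mul]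
  · linear_combination (-v.1) * hmn - n * h
  · linear_combination (-v.2) * hmn + m * h

theorem eq_or_eq_neg_of_cross_eq_zero {u v : ℤ × ℤ} (hu : IsCoprime u.1 u.2)
    (hv : IsCoprime v.1 v.2) (h : cross u v = 0) : v = u ∨ v = -u := by
  obtain ⟨k, rfl⟩ := exists_eq_smul_of_cross_eq_zero hu h
  simp only [Prod.smul_fst, Prod.smul_snd, smul_eq_mul] at hv
  rcases Int.isUnit_iff.1 (isCoprime_self.1 hv.of_mul_left_left.of_mul_right_left) with rfl | rfl
    <;> simp

theorem exists_not_dvd_cross {v₁ v₂ : ℤ × ℤ} (hD : 2 ≤ cross v₁ v₂) :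
    ∃ z : ℤ × ℤ, ¬ (cross v₁ v₂ ∣ cross z v₂ ∧ cross v₁ v₂ ∣ cross v₁ z) := by
  set D := cross v₁ v₂ with hDdef
  -- otherwise `D` divides all coordinates of `v₁` and `v₂`, so `D ^ 2 ∣ D`
  by_contra! hall
  obtain ⟨⟨a, ha⟩, ⟨b, hb⟩⟩ := hall (1, 0)
  obtain ⟨⟨c, hc⟩, ⟨d, hd⟩⟩ := hall (0, 1)
  simp only [cross] at ha hb hc hd hDdef
  have hDD : D = D * D * (a * d - b * c) := by
    linear_combination hDdef + v₁.1 * ha + D * a * hd + v₁.2 * hc - D * c * hb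
  rcases le_or_gt (a * d - b * c) 0 with hk | hk <;> nlinarith

/-- By Cramer's rule `cross v₁ v₂ • z = cross z v₂ • v₁ + cross v₁ z • v₂`, so `z` is a lattice
point of the triangle `0, v₁, v₂` other than its vertices. -/
theorem exists_lattice_point_in_triangle {v₁ v₂ : ℤ × ℤ} (hD : 2 ≤ cross v₁ v₂) :
    ∃ z : ℤ × ℤ, 0 ≤ cross z v₂ ∧ 0 ≤ cross v₁ z ∧ cross z v₂ < cross v₁ v₂ ∧
      cross v₁ z < cross v₁ v₂ ∧ 0 < cross z v₂ + cross v₁ z ∧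
      cross z v₂ + cross v₁ z ≤ cross v₁ v₂ := by
  obtain ⟨z₀, hz₀⟩ := exists_not_dvd_cross hD
  set D := cross v₁ v₂ with hDdef
  set z₁ := z₀ - (cross z₀ v₂ / D) • v₁ - (cross v₁ z₀ / D) • v₂
  have hA : cross z₁ v₂ = cross z₀ v₂ % D := by
    simp only [z₁, hDdef, Int.emod_def, cross, Prod.fst_sub, Prod.snd_sub, Prod.smul_fst,
      Prod.smul_snd, smul_eq_mul]
    ring
  have hB : cross v₁ z₁ = cross v₁ z₀ % D := by
    simp only [z₁, hDdef, Int.emod_def, cross, Prod.fst_sub, Prod.snd_sub, Prod.smul_fst,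
      Prod.smul_snd, smul_eq_mul]
    ring
  have hA₀ := Int.emod_nonneg (cross z₀ v₂) (by omega : D ≠ 0)
  have hB₀ := Int.emod_nonneg (cross v₁ z₀) (by omega : D ≠ 0)
  have hAD := Int.emod_lt_of_pos (cross z₀ v₂) (by omega : 0 < D)
  have hBD := Int.emod_lt_of_pos (cross v₁ z₀) (by omega : 0 < D)
  have hne : cross z₀ v₂ % D ≠ 0 ∨ cross v₁ z₀ % D ≠ 0 := by
    by_contra! h
    exact hz₀ ⟨Int.dvd_of_emod_eq_zero h.1, Int.dvd_of_emod_eq_zero h.2⟩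
  rcases le_or_gt (cross z₁ v₂ + cross v₁ z₁) D with hle | hgt
  · exact ⟨z₁, by omega, by omega, by omega, by omega, by omega, hle⟩
  · -- reflect through the midpoint of the edge `v₁ v₂`
    have h₁ : cross (v₁ + v₂ - z₁) v₂ = D - cross z₁ v₂ := by
      simp only [hDdef, cross, Prod.fst_sub, Prod.snd_sub, Prod.fst_add, Prod.snd_add]
      ring
    have h₂ : cross v₁ (v₁ + v₂ - z₁) = D - cross v₁ z₁ := by
      simp only [hDdef, cross, Prod.fst_sub, Prod.snd_sub, Prod.fst_add, Prod.snd_add]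
      ring
    refine ⟨v₁ + v₂ - z₁, ?_⟩
    rw [h₁, h₂]
    omega

theorem exists_ne_add_eq_two_smul {s : Finset (ℤ × ℤ)} (hs : 4 < s.card) :
    ∃ p ∈ s, ∃ q ∈ s, p ≠ q ∧ ∃ m : ℤ × ℤ, p + q = (2 : ℤ) • m := by
  obtain ⟨p, hp, q, hq, hpq, hf⟩ := Finset.exists_ne_map_eq_of_card_lt_of_maps_to
    (t := (Finset.univ : Finset (ZMod 2 × ZMod 2))) (by simpa using hs)
    (f := fun p : ℤ × ℤ => ((p.1 : ZMod 2), (p.2 : ZMod 2))) (fun _ _ => Finset.mem_univ _)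
  simp only [Prod.mk.injEq, ZMod.intCast_eq_intCast_iff_dvd_sub, Nat.cast_ofNat] at hf
  obtain ⟨⟨a, ha⟩, ⟨b, hb⟩⟩ := hf
  refine ⟨p, hp, q, hq, hpq, (p.1 + a, p.2 + b), ?_⟩
  ext <;> simp only [Prod.fst_add, Prod.snd_add, Prod.smul_mk, smul_eq_mul] <;> omega

theorem Finset.exists_eq_insert_insert_pair {α : Type*} [DecidableEq α] {s : Finset α}
    (hs : s.card = 4) {p q : α} (hp : p ∈ s) (hq : q ∈ s) (hpq : p ≠ q) :
    ∃ r t, r ≠ p ∧ r ≠ q ∧ t ≠ p ∧ t ≠ q ∧ s = {p, q, r, t} := by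
  have hq' : q ∈ s.erase p := Finset.mem_erase.2 ⟨hpq.symm, hq⟩
  obtain ⟨r, t, -, hrt⟩ := Finset.card_eq_two.1 (show ((s.erase p).erase q).card = 2 by
    rw [Finset.card_erase_of_mem hq', Finset.card_erase_of_mem hp, hs])
  have hr : r ∈ (s.erase p).erase q := hrt ▸ Finset.mem_insert_self r {t}
  have ht : t ∈ (s.erase p).erase q :=
    hrt ▸ Finset.mem_insert_of_mem (Finset.mem_singleton_self t)
  simp only [Finset.mem_erase] at hr ht
  refine ⟨r, t, hr.2.1, hr.1, ht.2.1, ht.1, ?_⟩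
  rw [← Finset.insert_erase hp, ← Finset.insert_erase hq', hrt]

theorem exists_cross_sub_lt_zero {Q : Finset (ℤ × ℤ)} {w u : ℤ × ℤ} (hu : u ≠ 0)
    (hw : toR w ∈ interior (hullR Q)) : ∃ p ∈ Q, cross u (p - w) < 0 := by
  by_contra! h
  have hαβ : -u.2 ≠ 0 ∨ u.1 ≠ 0 := by
    by_contra! h0
    exact hu (Prod.ext h0.2 (neg_eq_zero.1 h0.1))
  have := lt_of_toR_mem_interior_hullR (r := u.1 * w.2 - u.2 * w.1) hαβ
    (fun p hp => by
      have := h p hp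
      simp only [cross, Prod.fst_sub, Prod.snd_sub] at this
      linarith) hw
  linarith

theorem quadrangle_neg (w u a b : ℤ × ℤ) :
    ({w + -u, w - -u, w + a, w + b} : Finset (ℤ × ℤ)) = {w + u, w - u, w + a, w + b} := by
  rw [← sub_eq_add_neg, sub_neg_eq_add, Finset.insert_comm]

theorem cross_lt_zero_or_of_mem_interior {w u a b : ℤ × ℤ} (hu : u ≠ 0)
    (hw : toR w ∈ interior (hullR {w + u, w - u, w + a, w + b})) :
    cross u a < 0 ∨ cross u b < 0 := by
  obtain ⟨p, hp, hlt⟩ := exists_cross_sub_lt_zero hu hw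
  simp only [Finset.mem_insert, Finset.mem_singleton] at hp
  rcases hp with rfl | rfl | rfl | rfl <;>
    simp only [add_sub_cancel_left, sub_sub_cancel_left] at hlt
  · simp [cross, mul_comm] at hlt
  · simp [cross, mul_comm] at hlt
  · exact Or.inl hlt
  · exact Or.inr hlt

theorem IsUnimodularAffine.exists_inverse {T : ℤ × ℤ → ℤ × ℤ} (hT : IsUnimodularAffine T) :
    ∃ S, IsUnimodularAffine S ∧ Function.LeftInverse S T ∧ Function.RightInverse S T := by
  obtain ⟨a, b, c, d, e, f, hdet, hT⟩ := hT
  set D := a * d - b * c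
  have hD : D * D = 1 := by rcases hdet with h | h <;> rw [h] <;> rfl
  refine ⟨fun p => (D * d * p.1 - D * b * p.2 + D * (b * f - d * e),
    -(D * c) * p.1 + D * a * p.2 + D * (c * e - a * f)), ⟨D * d, -(D * b), -(D * c), D * a,
    D * (b * f - d * e), D * (c * e - a * f), ?_, fun p => by ring_nf⟩, fun p => ?_, fun p => ?_⟩
  · have : D * d * (D * a) - -(D * b) * -(D * c) = D := by linear_combination D * hD
    rw [this]
    exact hdet
  · rw [hT]
    ext
    · linear_combination p.1 * hD
    · linear_combination p.2 * hD
  · rw [hT]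
    ext
    · linear_combination (p.1 - e) * hD
    · linear_combination (p.2 - f) * hD

theorem LatticeEquiv.symm {Q Q' : Finset (ℤ × ℤ)} (h : LatticeEquiv Q Q') :
    LatticeEquiv Q' Q := by
  obtain ⟨T, hT, rfl⟩ := h
  obtain ⟨S, hS, hST, -⟩ := hT.exists_inverse
  exact ⟨S, hS, by rw [Finset.image_image, hST.comp_eq_id, Finset.image_id]⟩

theorem isUnimodularAffine_of_cross (o e₁ e₂ : ℤ × ℤ)
    (h : cross e₁ e₂ = 1 ∨ cross e₁ e₂ = -1) :
    IsUnimodularAffine fun p => o + p.1 • e₁ + p.2 • e₂ :=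
  ⟨e₁.1, e₂.1, e₁.2, e₂.2, o.1, o.2, by simpa only [cross, mul_comm e₁.2] using h,
    fun p => by
      ext <;> simp only [Prod.fst_add, Prod.snd_add, Prod.smul_fst, Prod.smul_snd,
        smul_eq_mul] <;> ring⟩

theorem IsUnimodularAffine.exists_affineEquiv {T : ℤ × ℤ → ℤ × ℤ} (hT : IsUnimodularAffine T) :
    ∃ F : ℝ × ℝ ≃ᵃ[ℝ] ℝ × ℝ, ∀ p, F (toR p) = toR (T p) := by
  obtain ⟨a, b, c, d, e, f, hdet, hT⟩ := hT
  have hM : IsUnit (LinearMap.toMatrix (Module.Basis.finTwoProd ℝ) (Module.Basis.finTwoProd ℝ)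
      (Matrix.toLin (Module.Basis.finTwoProd ℝ) (Module.Basis.finTwoProd ℝ)
        !![(a : ℝ), b; c, d])).det := by
    rw [LinearMap.toMatrix_toLin, Matrix.det_fin_two_of, isUnit_iff_ne_zero]
    exact_mod_cast (by omega : a * d - b * c ≠ 0)
  refine ⟨(LinearEquiv.ofIsUnitDet hM).toAffineEquiv.trans
    (AffineEquiv.constVAdd ℝ (ℝ × ℝ) ((e : ℝ), (f : ℝ))), fun p => ?_⟩
  simp only [toR, AffineEquiv.trans_apply, LinearEquiv.coe_toAffineEquiv,
    LinearEquiv.ofIsUnitDet_apply, Matrix.toLin_finTwoProd_apply, AffineEquiv.constVAdd_apply,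
    vadd_eq_add, Prod.mk_add_mk, hT, Int.cast_add, Int.cast_mul, Prod.mk.injEq]
  constructor <;> ring

theorem IsLatticePolygonPrimitiveEdges.image {Q : Finset (ℤ × ℤ)} {n i : ℕ}
    {T : ℤ × ℤ → ℤ × ℤ} (hT : IsUnimodularAffine T)
    (hQ : IsLatticePolygonPrimitiveEdges Q n i) :
    IsLatticePolygonPrimitiveEdges (Q.image T) n i := by
  obtain ⟨S, -, hST, hTS⟩ := hT.exists_inverse
  obtain ⟨F, hF⟩ := hT.exists_affineEquiv
  have hinj : Function.Injective T := hST.injective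
  have hhull : hullR (Q.image T) = F '' hullR Q := by
    have := F.toAffineMap.image_convexHull (toR '' ↑Q)
    rw [AffineEquiv.coe_toAffineMap] at this
    rw [hullR, hullR, this, Finset.coe_image, ← image_comp, ← image_comp]
    exact congrArg _ (image_congr fun p _ => (hF p).symm)
  have hmem : ∀ p X, toR (T p) ∈ F '' X ↔ toR p ∈ X := fun p X => by
    rw [← hF, F.injective.mem_set_image]
  have hpre : ∀ X, {q | toR q ∈ F '' X} = T '' {p | toR p ∈ X} := fun X => by
    ext q
    obtain ⟨p, rfl⟩ := hTS.surjective q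
    exact (hmem p X).trans (hinj.mem_set_image (s := {p | toR p ∈ X})).symm
  obtain ⟨hcard, hext, hfr, hint⟩ := hQ
  refine ⟨by rw [Finset.card_image_of_injective _ hinj, hcard], ?_, fun q hq => ?_, ?_⟩
  · rw [Finset.forall_mem_image]
    intro p hp
    rw [hhull, ← F.image_extremePoints, hmem]
    exact hext p hp
  · rw [hhull, ← F.coe_toHomeomorphOfFiniteDimensional, ← Homeomorph.image_frontier] at hq
    obtain ⟨p, rfl⟩ := hTS.surjective q
    exact Finset.mem_image_of_mem T (hfr p ((hmem p _).1 hq))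
  · rw [hhull, ← F.coe_toHomeomorphOfFiniteDimensional, ← Homeomorph.image_interior,
      F.coe_toHomeomorphOfFiniteDimensional, hpre, ncard_image_of_injective _ hinj, hint]

/-- `Q` is symmetric about the point `c / 2`. -/
def IsCentrallySymmetric (Q : Finset (ℤ × ℤ)) : Prop := ∃ c : ℤ × ℤ, ∀ p ∈ Q, c - p ∈ Q

theorem IsCentrallySymmetric.image {Q : Finset (ℤ × ℤ)} {T : ℤ × ℤ → ℤ × ℤ}
    (hT : IsUnimodularAffine T) (hQ : IsCentrallySymmetric Q) :
    IsCentrallySymmetric (Q.image T) := by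
  obtain ⟨a, b, c, d, e, f, -, hT⟩ := hT
  obtain ⟨z, hz⟩ := hQ
  refine ⟨(a * z.1 + b * z.2 + 2 * e, c * z.1 + d * z.2 + 2 * f), Finset.forall_mem_image.2 ?_⟩
  intro p hp
  convert Finset.mem_image_of_mem T (hz p hp) using 1
  rw [hT, hT]
  ext <;> simp only [Prod.fst_sub, Prod.snd_sub] <;> ring

structure IsLatticePolygonWithCenter (Q : Finset (ℤ × ℤ)) (w : ℤ × ℤ) : Prop where
  extreme : ∀ p ∈ Q, toR p ∈ (hullR Q).extremePoints ℝ
  center_mem_interior : toR w ∈ interior (hullR Q)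
  mem_or_eq_center : ∀ q : ℤ × ℤ, toR q ∈ hullR Q → q ∈ Q ∨ q = w

namespace IsLatticePolygonWithCenter

variable {Q : Finset (ℤ × ℤ)} {w : ℤ × ℤ}

theorem toR_notMem_interior (hQ : IsLatticePolygonWithCenter Q w) {p : ℤ × ℤ} (hp : p ∈ Q) :
    toR p ∉ interior (hullR Q) :=
  disjoint_left.1 (disjoint_interior_extremePoints _) |>.mt (not_not.2 (hQ.extreme p hp))

theorem eq_center_of_mem_interior (hQ : IsLatticePolygonWithCenter Q w) {z : ℤ × ℤ}
    (hz : toR z ∈ interior (hullR Q)) : z = w :=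
  (hQ.mem_or_eq_center z (interior_subset hz)).resolve_left fun hzQ =>
    hQ.toR_notMem_interior hzQ hz

theorem center_notMem (hQ : IsLatticePolygonWithCenter Q w) : w ∉ Q :=
  fun hw => hQ.toR_notMem_interior hw hQ.center_mem_interior

theorem eq_center_of_mem_openSegment (hQ : IsLatticePolygonWithCenter Q w) {x : ℝ × ℝ}
    (hx : x ∈ hullR Q) {z : ℤ × ℤ} (hz : toR z ∈ openSegment ℝ (toR w) x) : z = w :=
  hQ.eq_center_of_mem_interior <| (convex_hullR Q).openSegment_interior_closure_subset_interior
    hQ.center_mem_interior (subset_closure hx) hz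

theorem isCoprime_sub_center (hQ : IsLatticePolygonWithCenter Q w) {p : ℤ × ℤ} (hp : p ∈ Q) :
    IsCoprime (p - w).1 (p - w).2 := by
  set g : ℤ := (Int.gcd (p - w).1 (p - w).2 : ℤ) with hg
  obtain ⟨v, hv⟩ : ∃ v : ℤ × ℤ, p = w + g • v :=
    ⟨((p - w).1 / g, (p - w).2 / g), by
      ext <;> simp only [hg, Prod.fst_add, Prod.snd_add, Prod.smul_mk, smul_eq_mul,
        Int.mul_ediv_cancel' (Int.gcd_dvd_left _ _), Int.mul_ediv_cancel' (Int.gcd_dvd_right _ _),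
        Prod.fst_sub, Prod.snd_sub, add_sub_cancel]⟩
  have hv0 : v ≠ 0 := by
    rintro rfl
    exact hQ.center_notMem (by simpa [hv] using hp)
  rw [Int.isCoprime_iff_gcd_eq_one]
  by_contra hg1
  have hg2 : (2 : ℝ) ≤ g := by
    have : g ≠ 0 := fun h => hQ.center_notMem (by simpa [hv, h] using hp)
    exact_mod_cast (show 2 ≤ g by omega)
  have hseg : toR (w + v) ∈ openSegment ℝ (toR w) (toR p) := by
    refine ⟨1 - 1 / g, 1 / g, by rw [sub_pos, div_lt_one (by linarith)]; linarith,
      by positivity, by ring, ?_⟩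
    rw [hv, toR_add, toR_add, toR_zsmul, smul_add, smul_smul, one_div_mul_cancel (by positivity)]
    module
  exact hv0 (by simpa using hQ.eq_center_of_mem_openSegment (toR_mem_hullR hp) hseg)

theorem eq_zero_of_mem_triangle (hQ : IsLatticePolygonWithCenter Q w) {v₁ v₂ z : ℤ × ℤ}
    (h₁ : w + v₁ ∈ Q) (h₂ : w + v₂ ∈ Q) {s t : ℝ} (hs : 0 ≤ s) (ht : 0 ≤ t) (hst : s + t < 1)
    (hz : toR z = s • toR v₁ + t • toR v₂) : z = 0 := by
  rcases (add_nonneg hs ht).eq_or_lt with hst0 | hst0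
  · obtain rfl : s = 0 := by linarith
    obtain rfl : t = 0 := by linarith
    apply toR_injective
    simpa [toR] using hz
  set m : ℝ × ℝ := (s / (s + t)) • toR (w + v₁) + (t / (s + t)) • toR (w + v₂)
  have hm : m ∈ hullR Q := convex_hullR Q (toR_mem_hullR h₁) (toR_mem_hullR h₂)
    (by positivity) (by positivity) (by field_simp)
  have hseg : toR (w + z) ∈ openSegment ℝ (toR w) m := by
    refine ⟨1 - (s + t), s + t, by linarith, hst0, by ring, ?_⟩
    rw [smul_add, smul_smul, smul_smul, mul_div_cancel₀ _ hst0.ne', mul_div_cancel₀ _ hst0.ne',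
      toR_add, toR_add, toR_add, hz]
    module
  simpa using hQ.eq_center_of_mem_openSegment hm hseg

theorem eq_zero_or_eq_of_mem_edge (hQ : IsLatticePolygonWithCenter Q w) {v₁ v₂ z : ℤ × ℤ}
    (h₁ : w + v₁ ∈ Q) (h₂ : w + v₂ ∈ Q) {s t : ℝ} (hs : 0 < s) (ht : 0 < t) (hst : s + t = 1)
    (hz : toR z = s • toR v₁ + t • toR v₂) : z = 0 ∨ v₁ = v₂ := by
  have hseg : toR (w + z) ∈ openSegment ℝ (toR (w + v₁)) (toR (w + v₂)) := by
    refine ⟨s, t, hs, ht, hst, ?_⟩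
    rw [toR_add, toR_add, toR_add, hz, smul_add, smul_add, add_add_add_comm, ← add_smul, hst,
      one_smul]
  have hmem := (convex_hullR Q).openSegment_subset (toR_mem_hullR h₁) (toR_mem_hullR h₂) hseg
  rcases hQ.mem_or_eq_center _ hmem with hzQ | hzw
  · obtain ⟨e₁, e₂⟩ :=
      (mem_extremePoints.1 (hQ.extreme _ hzQ)).2 _ (toR_mem_hullR h₁) _ (toR_mem_hullR h₂) hseg
    exact Or.inr (by simpa using toR_injective (e₁.trans e₂.symm))
  · exact Or.inl (by simpa using hzw)

theorem cross_le_one (hQ : IsLatticePolygonWithCenter Q w) {v₁ v₂ : ℤ × ℤ} (h₁ : w + v₁ ∈ Q)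
    (h₂ : w + v₂ ∈ Q) : cross v₁ v₂ ≤ 1 := by
  by_contra! hD
  obtain ⟨z, hA₀, hB₀, hAD, hBD, hAB₀, hABD⟩ := exists_lattice_point_in_triangle hD
  have hz : z ≠ 0 := by rintro rfl; simp [cross] at hAB₀
  have hv : v₁ ≠ v₂ := by rintro rfl; simp [cross, mul_comm] at hD
  have hDR : (0 : ℝ) < cross v₁ v₂ := by exact_mod_cast (show 0 < cross v₁ v₂ by omega)
  have hzR := toR_eq_cross_div (show cross v₁ v₂ ≠ 0 by omega) z
  rcases hABD.lt_or_eq with hlt | heq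
  · refine hz (hQ.eq_zero_of_mem_triangle h₁ h₂ (by positivity) (by positivity) ?_ hzR)
    rw [← add_div, div_lt_one hDR]
    exact_mod_cast hlt
  · refine (hQ.eq_zero_or_eq_of_mem_edge h₁ h₂ (div_pos ?_ hDR) (div_pos ?_ hDR) ?_ hzR).elim
      hz hv
    · exact_mod_cast (show 0 < cross z v₂ by omega)
    · exact_mod_cast (show 0 < cross v₁ z by omega)
    · rw [← add_div, div_eq_one_iff_eq hDR.ne']
      exact_mod_cast heq

theorem cross_eq_one_or_neg_one (hQ : IsLatticePolygonWithCenter Q w) {v₁ v₂ : ℤ × ℤ}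
    (h₁ : w + v₁ ∈ Q) (h₂ : w + v₂ ∈ Q) (h : cross v₁ v₂ ≠ 0) :
    cross v₁ v₂ = 1 ∨ cross v₁ v₂ = -1 := by
  have h₁₂ := hQ.cross_le_one h₁ h₂
  have h₂₁ := hQ.cross_le_one h₂ h₁
  have : cross v₂ v₁ = -cross v₁ v₂ := by
    simp only [cross]
    ring
  omega

theorem add_eq_two_smul_center (hQ : IsLatticePolygonWithCenter Q w) {p q m : ℤ × ℤ}
    (hp : p ∈ insert w Q) (hq : q ∈ insert w Q) (hpq : p ≠ q) (hm : p + q = (2 : ℤ) • m) :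
    p ∈ Q ∧ q ∈ Q ∧ p + q = (2 : ℤ) • w := by
  have hmid : toR m ∈ openSegment ℝ (toR p) (toR q) := by
    refine ⟨1 / 2, 1 / 2, by norm_num, by norm_num, by norm_num, ?_⟩
    have := congrArg toR hm
    rw [toR_add, toR_zsmul] at this
    rw [← smul_add, this, smul_smul]
    norm_num
  have hmem : ∀ x ∈ insert w Q, toR x ∈ hullR Q := by
    simp only [Finset.mem_insert, forall_eq_or_imp]
    exact ⟨interior_subset hQ.center_mem_interior, fun x hx => toR_mem_hullR hx⟩
  -- if `p = w`, then `m` is an interior lattice point, so `m = w` and `q = p`; likewise for `q`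
  have hpQ : p ∈ Q := by
    refine (Finset.mem_insert.1 hp).resolve_left fun hpw => hpq ?_
    subst hpw
    obtain rfl := hQ.eq_center_of_mem_openSegment (hmem q hq) hmid
    rw [two_smul] at hm
    exact (add_left_cancel hm).symm
  have hqQ : q ∈ Q := by
    refine (Finset.mem_insert.1 hq).resolve_left fun hqw => hpq ?_
    subst hqw
    obtain rfl := hQ.eq_center_of_mem_openSegment (hmem p hp)
      (openSegment_symm ℝ (toR p) (toR q) ▸ hmid)
    rw [two_smul] at hm
    exact add_right_cancel hm
  refine ⟨hpQ, hqQ, ?_⟩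
  rcases hQ.mem_or_eq_center m
    ((convex_hullR Q).openSegment_subset (hmem p hp) (hmem q hq) hmid) with hmQ | rfl
  · obtain ⟨e₁, e₂⟩ :=
      (mem_extremePoints.1 (hQ.extreme m hmQ)).2 _ (hmem p hp) _ (hmem q hq) hmid
    exact absurd (toR_injective (e₁.trans e₂.symm)) hpq
  · exact hm

theorem exists_eq_quadrangle (hQ : IsLatticePolygonWithCenter Q w) (hcard : Q.card = 4) :
    ∃ u a b : ℤ × ℤ, a ≠ u ∧ a ≠ -u ∧ b ≠ u ∧ b ≠ -u ∧ Q = {w + u, w - u, w + a, w + b} := by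
  obtain ⟨p, hp, q, hq, hpq, m, hm⟩ := exists_ne_add_eq_two_smul
    (show 4 < (insert w Q).card by
      rw [Finset.card_insert_of_notMem hQ.center_notMem, hcard]; omega)
  obtain ⟨hpQ, hqQ, hpqw⟩ := hQ.add_eq_two_smul_center hp hq hpq hm
  obtain ⟨r, t, hrp, hrq, htp, htq, rfl⟩ := Finset.exists_eq_insert_insert_pair hcard hpQ hqQ hpq
  have hq' : q = w - (p - w) := by
    rw [two_smul] at hpqw
    rw [sub_sub_eq_add_sub, ← hpqw]
    abel
  refine ⟨p - w, r - w, t - w, fun h => hrp (sub_left_inj.1 h), fun h => hrq ?_,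
    fun h => htp (sub_left_inj.1 h), fun h => htq ?_, by rw [hq']; simp⟩
  · rw [hq', sub_eq_add_neg w, ← h]
    abel
  · rw [hq', sub_eq_add_neg w, ← h]
    abel

end IsLatticePolygonWithCenter

theorem isLatticePolygonPrimitiveEdges_one_iff {Q : Finset (ℤ × ℤ)} {n : ℕ} :
    IsLatticePolygonPrimitiveEdges Q n 1 ↔
      Q.card = n ∧ ∃ w, IsLatticePolygonWithCenter Q w := by
  constructor
  · rintro ⟨hcard, hext, hfr, hint⟩
    obtain ⟨w, hw⟩ := ncard_eq_one.1 hint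
    have hwint : ∀ q, toR q ∈ interior (hullR Q) ↔ q = w := fun q => by
      rw [← mem_singleton_iff, ← hw, mem_ofPred_eq]
    refine ⟨hcard, w, hext, (hwint w).2 rfl, fun q hq => ?_⟩
    by_cases hqi : toR q ∈ interior (hullR Q)
    · exact Or.inr ((hwint q).1 hqi)
    · exact Or.inl (hfr q ⟨subset_closure hq, hqi⟩)
  · rintro ⟨hcard, w, hQ⟩
    refine ⟨hcard, hQ.extreme, fun q hq => ?_, ?_⟩
    · rcases hQ.mem_or_eq_center q ((isClosed_hullR Q).frontier_subset hq) with hqQ | rfl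
      · exact hqQ
      · exact absurd hQ.center_mem_interior hq.2
    · have : {q | toR q ∈ interior (hullR Q)} = {w} :=
        Set.ext fun q => ⟨hQ.eq_center_of_mem_interior, fun hq => hq ▸ hQ.center_mem_interior⟩
      rw [this, ncard_singleton]

theorem isLatticePolygonPrimitiveEdges_Q1 : IsLatticePolygonPrimitiveEdges Q1 4 1 := by
  have hv : ∀ p ∈ Q1, toR p ∈ hullR Q1 := fun p => toR_mem_hullR
  have mid : ∀ x ∈ hullR Q1, ∀ y ∈ hullR Q1, ∀ a : ℝ, 0 ≤ a → a ≤ 1 →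
      (1 - a) • x + a • y ∈ hullR Q1 := fun x hx y hy a ha ha' =>
    convex_hullR Q1 hx hy (by linarith) ha (by ring)
  refine isLatticePolygonPrimitiveEdges_one_iff.2 ⟨rfl, (1, 1), ⟨?_, ?_, fun q hq => ?_⟩⟩
  · intro p hp
    simp only [Q1, Finset.mem_insert, Finset.mem_singleton] at hp
    rcases hp with rfl | rfl | rfl | rfl
    · exact toR_mem_extremePoints_hullR (by decide) (α := 1) (β := 2) (by decide)
    · exact toR_mem_extremePoints_hullR (by decide) (α := 1) (β := 0) (by decide)
    · exact toR_mem_extremePoints_hullR (by decide) (α := 0) (β := -1) (by decide)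
    · exact toR_mem_extremePoints_hullR (by decide) (α := -1) (β := 0) (by decide)
  · have h11 := mid _ (hv (1, 0) (by decide)) _ (hv (1, 2) (by decide)) (1 / 2) (by norm_num)
      (by norm_num)
    refine mem_interior_of_cross (convex_hullR Q1) (r := 1 / 2) (by norm_num) ?_ ?_ ?_ ?_
    · convert mid _ (hv (1, 2) (by decide)) _ (hv (2, 0) (by decide)) (1 / 2) (by norm_num)
        (by norm_num) using 1
      ext <;> norm_num [toR]
    · convert mid _ (hv (0, 1) (by decide)) _ h11 (1 / 2) (by norm_num) (by norm_num) using 1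
      ext <;> norm_num [toR]
    · convert mid _ (hv (1, 0) (by decide)) _ (hv (1, 2) (by decide)) (3 / 4) (by norm_num)
        (by norm_num) using 1
      ext <;> norm_num [toR]
    · convert mid _ (hv (1, 0) (by decide)) _ (hv (1, 2) (by decide)) (1 / 4) (by norm_num)
        (by norm_num) using 1
      ext <;> norm_num [toR]
  · have e₁ := le_of_toR_mem_hullR (Q := Q1) (α := 1) (β := 1) (r := 1) (by decide) hq
    have e₂ := le_of_toR_mem_hullR (Q := Q1) (α := 0) (β := 1) (r := 0) (by decide) hq
    have e₃ := le_of_toR_mem_hullR (Q := Q1) (α := -2) (β := -1) (r := -4) (by decide) hq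
    have e₄ := le_of_toR_mem_hullR (Q := Q1) (α := 1) (β := -1) (r := -1) (by decide) hq
    simp only [Q1, Finset.mem_insert, Finset.mem_singleton, Prod.ext_iff]
    omega

theorem isLatticePolygonPrimitiveEdges_Q2 : IsLatticePolygonPrimitiveEdges Q2 4 1 := by
  have hv : ∀ p ∈ Q2, toR p ∈ hullR Q2 := fun p => toR_mem_hullR
  refine isLatticePolygonPrimitiveEdges_one_iff.2 ⟨rfl, (0, 1), ⟨?_, ?_, fun q hq => ?_⟩⟩
  · intro p hp
    simp only [Q2, Finset.mem_insert, Finset.mem_singleton] at hp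
    rcases hp with rfl | rfl | rfl | rfl
    · exact toR_mem_extremePoints_hullR (by decide) (α := 0) (β := 1) (by decide)
    · exact toR_mem_extremePoints_hullR (by decide) (α := -1) (β := 0) (by decide)
    · exact toR_mem_extremePoints_hullR (by decide) (α := 0) (β := -1) (by decide)
    · exact toR_mem_extremePoints_hullR (by decide) (α := 1) (β := 0) (by decide)
  · refine mem_interior_of_cross (convex_hullR Q2) (r := 1) one_pos ?_ ?_ ?_ ?_
    · convert hv (1, 1) (by decide) using 1; ext <;> norm_num [toR]
    · convert hv (-1, 1) (by decide) using 1; ext <;> norm_num [toR]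
    · convert hv (0, 2) (by decide) using 1; ext <;> norm_num [toR]
    · convert hv (0, 0) (by decide) using 1; ext <;> norm_num [toR]
  · have e₁ := le_of_toR_mem_hullR (Q := Q2) (α := -1) (β := -1) (r := -2) (by decide) hq
    have e₂ := le_of_toR_mem_hullR (Q := Q2) (α := 1) (β := -1) (r := -2) (by decide) hq
    have e₃ := le_of_toR_mem_hullR (Q := Q2) (α := -1) (β := 1) (r := 0) (by decide) hq
    have e₄ := le_of_toR_mem_hullR (Q := Q2) (α := 1) (β := 1) (r := 0) (by decide) hq
    simp only [Q2, Finset.mem_insert, Finset.mem_singleton, Prod.ext_iff]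
    omega

theorem isCentrallySymmetric_Q2 : IsCentrallySymmetric Q2 := ⟨(0, 2), by decide⟩

theorem not_isCentrallySymmetric_Q1 : ¬ IsCentrallySymmetric Q1 := by
  rintro ⟨c, hc⟩
  have h₁ := hc (1, 0) (by decide)
  have h₂ := hc (0, 1) (by decide)
  have h₃ := hc (1, 2) (by decide)
  simp only [Q1, Finset.mem_insert, Finset.mem_singleton, Prod.ext_iff, Prod.fst_sub,
    Prod.snd_sub] at h₁ h₂ h₃
  omega

theorem latticeEquiv_Q2_of_cross (w u a : ℤ × ℤ) (h : cross u a = 1 ∨ cross u a = -1) :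
    LatticeEquiv {w + u, w - u, w + a, w + -a} Q2 := by
  refine LatticeEquiv.symm ⟨_, isUnimodularAffine_of_cross (w - a) u a h, ?_⟩
  simp only [Q2, Finset.image_insert, Finset.image_singleton]
  rw [show w - a + (0 : ℤ) • u + (0 : ℤ) • a = w + -a by module,
    show w - a + (1 : ℤ) • u + (1 : ℤ) • a = w + u by module,
    show w - a + (0 : ℤ) • u + (2 : ℤ) • a = w + a by module,
    show w - a + (-1 : ℤ) • u + (1 : ℤ) • a = w - u by module]
  ext x
  simp only [Finset.mem_insert, Finset.mem_singleton]
  tauto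

theorem latticeEquiv_Q1_of_cross (w a b : ℤ × ℤ) (h : cross a b = 1 ∨ cross a b = -1) :
    LatticeEquiv {w + (a + b), w - (a + b), w + a, w + b} Q1 := by
  have h' : cross (-a) (-(a + b)) = cross a b := by
    simp only [cross, Prod.fst_neg, Prod.snd_neg, Prod.fst_add, Prod.snd_add]
    ring
  rw [← h'] at h
  refine LatticeEquiv.symm
    ⟨_, isUnimodularAffine_of_cross (w + a + (a + b)) (-a) (-(a + b)) h, ?_⟩
  simp only [Q1, Finset.image_insert, Finset.image_singleton]
  rw [show w + a + (a + b) + (1 : ℤ) • -a + (0 : ℤ) • -(a + b) = w + (a + b) by module,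
    show w + a + (a + b) + (0 : ℤ) • -a + (1 : ℤ) • -(a + b) = w + a by module,
    show w + a + (a + b) + (1 : ℤ) • -a + (2 : ℤ) • -(a + b) = w - (a + b) by module,
    show w + a + (a + b) + (2 : ℤ) • -a + (0 : ℤ) • -(a + b) = w + b by module]
  ext x
  simp only [Finset.mem_insert, Finset.mem_singleton]
  tauto

theorem IsLatticePolygonWithCenter.latticeEquiv_Q1_or_Q2 {Q : Finset (ℤ × ℤ)} {w : ℤ × ℤ}
    (hQ : IsLatticePolygonWithCenter Q w) (hcard : Q.card = 4) :
    LatticeEquiv Q Q1 ∨ LatticeEquiv Q Q2 := by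
  obtain ⟨u, a, b, hau, hau', hbu, hbu', rfl⟩ := hQ.exists_eq_quadrangle hcard
  have hcop : ∀ v, w + v ∈ ({w + u, w - u, w + a, w + b} : Finset (ℤ × ℤ)) →
      IsCoprime v.1 v.2 := fun v hv => by simpa using hQ.isCoprime_sub_center hv
  have hu := hcop u (by simp)
  have hu0 : u ≠ 0 := by rintro rfl; exact not_isCoprime_zero_zero hu
  have hua := hQ.cross_eq_one_or_neg_one (v₁ := u) (v₂ := a) (by simp) (by simp)
    fun h => (eq_or_eq_neg_of_cross_eq_zero hu (hcop a (by simp)) h).elim hau hau'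
  have hub := hQ.cross_eq_one_or_neg_one (v₁ := u) (v₂ := b) (by simp) (by simp)
    fun h => (eq_or_eq_neg_of_cross_eq_zero hu (hcop b (by simp)) h).elim hbu hbu'
  -- the line through `w` in direction `u` separates `w + a` from `w + b`
  have hsep₁ := cross_lt_zero_or_of_mem_interior hu0 hQ.center_mem_interior
  have hsep₂ := cross_lt_zero_or_of_mem_interior (neg_ne_zero.2 hu0)
    (by rw [quadrangle_neg]; exact hQ.center_mem_interior)
  rw [cross_neg_left, cross_neg_left] at hsep₂
  obtain ⟨k, hk⟩ := exists_eq_smul_of_cross_eq_zero hu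
    (show cross u (a + b) = 0 by rw [cross_add_right]; omega)
  rcases eq_or_ne k 0 with rfl | hk0
  · right
    rw [zero_smul] at hk
    rw [eq_neg_of_add_eq_zero_right hk]
    exact latticeEquiv_Q2_of_cross w u a hua
  · left
    have hab : cross a b = -(k * cross u a) := by
      rw [show b = k • u - a by rw [← hk]; abel]
      simp only [cross, Prod.fst_sub, Prod.snd_sub, Prod.smul_fst, Prod.smul_snd, smul_eq_mul]
      ring
    have hab' := hQ.cross_eq_one_or_neg_one (v₁ := a) (v₂ := b) (by simp) (by simp)
      (by rw [hab]; exact neg_ne_zero.2 (mul_ne_zero hk0 (by omega)))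
    have hk1 : k = 1 ∨ k = -1 := by rcases hua with h | h <;> rw [h] at hab <;> omega
    rcases hk1 with rfl | rfl
    · obtain rfl : u = a + b := by rw [hk, one_smul]
      exact latticeEquiv_Q1_of_cross w a b hab'
    · obtain rfl : u = -(a + b) := by rw [hk, neg_smul, one_smul, neg_neg]
      rw [quadrangle_neg]
      exact latticeEquiv_Q1_of_cross w a b hab'

/-- up to Aff(ℤ²), Q1 and Q2 are the only lattice quadrangles with exactly
one interior integral point and all edges of lattice length 1. -/
theorem classification_quadrangles_one_interior_point :
    (∀ Q : Finset (ℤ × ℤ),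
      IsLatticePolygonPrimitiveEdges Q 4 1 ↔ (LatticeEquiv Q Q1 ∨ LatticeEquiv Q Q2)) ∧
    ¬ LatticeEquiv Q1 Q2 := by
  refine ⟨fun Q => ⟨fun hQ => ?_, ?_⟩, fun h => ?_⟩
  · obtain ⟨hcard, w, hw⟩ := isLatticePolygonPrimitiveEdges_one_iff.1 hQ
    exact hw.latticeEquiv_Q1_or_Q2 hcard
  · rintro (h | h) <;> obtain ⟨T, hT, rfl⟩ := h.symm
    · exact isLatticePolygonPrimitiveEdges_Q1.image hT
    · exact isLatticePolygonPrimitiveEdges_Q2.image hT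
  · obtain ⟨T, hT, hTQ⟩ := h.symm
    exact not_isCentrallySymmetric_Q1 (hTQ ▸ isCentrallySymmetric_Q2.image hT)
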